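/- Let G > 0 and Δ > 0, and let m : (0,∞) → (0,∞) and α : (0,∞) → ℝ be differentiable with m'(R) > 0 and α'(R) > 0 for all R > 0. Define r(R,t) = (2G m(R))^{1/3} · ((9/4)(t − α(R))² + Δ)^{1/3}. Then for every R > 0 and every t ≤ α(R) (i.e. up to and including the bounce of shell R), ∂_R r(R,t) > 0; hence no shell-crossing singularity forms during the pre-bounce phase. -/

import Mathlib

open Real

/-! Write `r(·, t)` as `f^{1/3} g^{1/3}` with `f = 2Gm` and `g = (9/4)(t − α)² + Δ`, both positive.
Then `f' = 2Gm' > 0`, and `g' = (9/2)(α − t)α' ≥ 0` as long as `t ≤ α`, so the product rule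
gives `∂_R r > 0`. -/

theorem deriv_rpow_mul_rpow_pos {f g : ℝ → ℝ} {f' g' x p q : ℝ}
    (hf : HasDerivAt f f' x) (hg : HasDerivAt g g' x) (hfx : 0 < f x) (hgx : 0 < g x)
    (hf' : 0 < f') (hg' : 0 ≤ g') (hp : 0 < p) (hq : 0 ≤ q) :
    0 < deriv (fun y => f y ^ p * g y ^ q) x := by
  have hderiv : HasDerivAt (fun y => f y ^ p * g y ^ q)
      (f' * p * f x ^ (p - 1) * g x ^ q + f x ^ p * (g' * q * g x ^ (q - 1))) x :=
    (hf.rpow_const (Or.inl hfx.ne')).mul (hg.rpow_const (Or.inl hgx.ne'))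
  rw [hderiv.deriv]
  have hfirst : 0 < f' * p * f x ^ (p - 1) * g x ^ q := by positivity
  have hsecond : 0 ≤ f x ^ p * (g' * q * g x ^ (q - 1)) := by positivity
  linarith

theorem HasDerivAt.const_mul_const_sub_sq_add {f : ℝ → ℝ} {f' x : ℝ} (c t d : ℝ)
    (hf : HasDerivAt f f' x) :
    HasDerivAt (fun y => c * (t - f y) ^ 2 + d) (2 * c * (f x - t) * f') x := by
  refine ((((hf.const_sub t).fun_pow 2).const_mul c).add_const d).congr_deriv ?_
  norm_num
  ring

theorem no_shell_crossing_before_bounce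
    (G Δ : ℝ) (hG : 0 < G) (hΔ : 0 < Δ)
    (m α : ℝ → ℝ)
    (hmpos : ∀ R, 0 < R → 0 < m R)
    (hmdiff : ∀ R, 0 < R → DifferentiableAt ℝ m R)
    (hαdiff : ∀ R, 0 < R → DifferentiableAt ℝ α R)
    (hm' : ∀ R, 0 < R → 0 < deriv m R)
    (hα' : ∀ R, 0 < R → 0 < deriv α R)
    (r : ℝ → ℝ → ℝ)
    (hr : ∀ R t, r R t =
      (2 * G * m R) ^ ((1:ℝ)/3) * ((9/4) * (t - α R) ^ 2 + Δ) ^ ((1:ℝ)/3)) :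
    ∀ R, 0 < R → ∀ t, t ≤ α R → 0 < deriv (fun R' => r R' t) R := by
  intro R hR t ht
  have hr_t : (fun R' => r R' t) = fun R' =>
      (2 * G * m R') ^ ((1:ℝ)/3) * ((9/4) * (t - α R') ^ 2 + Δ) ^ ((1:ℝ)/3) :=
    funext fun R' => hr R' t
  have hm := hmpos R hR
  have hmR := hm' R hR
  have hαR := hα' R hR
  have hbounce : 0 ≤ α R - t := sub_nonneg.mpr ht
  rw [hr_t]
  exact deriv_rpow_mul_rpow_pos ((hmdiff R hR).hasDerivAt.const_mul (2 * G))
    ((hαdiff R hR).hasDerivAt.const_mul_const_sub_sq_add (9/4) t Δ)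
    (by positivity) (by positivity) (by positivity) (by positivity) (by norm_num) (by norm_num)
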